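/- Let R be a commutative ring with 1 + 1 = 0, let (A, ω) be a curved associative algebra over R, let ι be a finite index set, and let ξ : ι × ι → A satisfy the curvature equation: for all i, j ∈ ι, ∑_{ℓ∈ι} ξ_{iℓ} · ξ_{ℓj} equals ω if i = j and 0 otherwise. Then for every m ≥ 1 and all i, j ∈ ι, the following identity holds in the m-fold tensor power A^{⊗m}: the sum, over all sequences i = k₀, k₁, …, k_{m+1} = j in ι and all positions 1 ≤ p ≤ m, of the tensors ξ_{k₀k₁} ⊗ … ⊗ ξ_{k_{p−2}k_{p−1}} ⊗ (ξ_{k_{p−1}k_p} · ξ_{k_p k_{p+1}}) ⊗ ξ_{k_{p+1}k_{p+2}} ⊗ … ⊗ ξ_{k_m k_{m+1}} (m tensor factors, obtained from an (m+1)-factor path tensor by multiplying the two adjacent factors at position p) equals the sum, over all sequences i = ℓ₀, ℓ₁, …, ℓ_{m−1} = j in ι and all positions 0 ≤ q ≤ m−1, of the tensors ℓ-path tensors ξ_{ℓ₀ℓ₁} ⊗ … ⊗ ξ_{ℓ_{q−1}ℓ_q} ⊗ ω ⊗ ξ_{ℓ_q ℓ_{q+1}} ⊗ … ⊗ ξ_{ℓ_{m−2}ℓ_{m−1}}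 (m tensor factors, obtained from an (m−1)-factor path tensor by inserting ω in position q). -/

import Mathlib

/-!
Fix the position `p` at which two adjacent factors are multiplied. The two factors share the
vertex `k_{p+1}`, which occurs nowhere else in the path tensor; summing over it first turns
`ξ_{k_p k_{p+1}} ξ_{k_{p+1} k_{p+2}}` into `ω δ_{k_p k_{p+2}}` by the curvature equation and
multilinearity. The Kronecker delta then collapses `k_{p+2}` onto `k_p`, and what remains is the
path `k_0, …, k_p, k_{p+3}, …, k_{m+1}` with `m - 1` edges and `ω` inserted at position `p`.
So both sides agree position by position.
-/

open TensorProduct Finset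

noncomputable section

variable (R : Type) [CommRing R]

/-- `TS R A m` is the `(m+1)`-fold tensor power `A^{⊗(m+1)}`,
nested as `A ⊗ (A ⊗ (⋯ ⊗ A))`. -/
def TS (A : Type) [Ring A] [Algebra R A] : ℕ → ModuleCat R
  | 0 => ModuleCat.of R A
  | m + 1 => ModuleCat.of R (A ⊗[R] ↥(TS A m))

/-- The pure tensor `f 0 ⊗ f 1 ⊗ ⋯ ⊗ f m` in `TS R A m` (an `(m+1)`-factor tensor). -/
def pureT (A : Type) [Ring A] [Algebra R A] (f : ℕ → A) : (m : ℕ) → ↥(TS R A m)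
  | 0 => f 0
  | m + 1 => f 0 ⊗ₜ[R] pureT A (fun i => f (i + 1)) m

section Sequences

variable {α : Type*}

def insertAt (s : ℕ) (a : α) (f : ℕ → α) : ℕ → α :=
  fun t => if t < s then f t else if t = s then a else f (t - 1)

theorem insertAt_apply_of_lt {s t : ℕ} (h : t < s) (a : α) (f : ℕ → α) :
    insertAt s a f t = f t :=
  if_pos h

@[simp]
theorem insertAt_apply_self (s : ℕ) (a : α) (f : ℕ → α) : insertAt s a f s = a := by
  simp [insertAt]

theorem insertAt_apply_succ_of_le {s t : ℕ} (h : s ≤ t) (a : α) (f : ℕ → α) :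
    insertAt s a f (t + 1) = f t := by
  simp [insertAt, show ¬ t + 1 < s by omega, show t + 1 ≠ s by omega]

theorem insertAt_succ_self_apply_succ {s t : ℕ} (h : s ≤ t) (f : ℕ → α) :
    insertAt (s + 1) (f s) f (t + 1) = f t := by
  rcases h.eq_or_lt with rfl | h
  · exact insertAt_apply_self _ _ _
  · exact insertAt_apply_succ_of_le h _ _

theorem update_insertAt_self (s : ℕ) (a b : α) (f : ℕ → α) :
    Function.update (insertAt s a f) s b = insertAt s b f := by
  ext t
  rcases eq_or_ne t s with rfl | h
  · simp
  · simp [insertAt, h]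

def extendFin {N : ℕ} (k : Fin N → α) (d : α) : ℕ → α :=
  fun t => if h : t < N then k ⟨t, h⟩ else d

theorem extendFin_insertNth {N : ℕ} (s : Fin (N + 1)) (a : α) (k : Fin N → α) (d : α) :
    extendFin (Fin.insertNth s a k) d = insertAt s a (extendFin k d) := by
  ext t
  simp only [extendFin, insertAt]
  rcases lt_trichotomy t s with h | rfl | h
  · rw [dif_pos (by omega), if_pos h, dif_pos (by omega),
      Fin.insertNth_apply_below (show (⟨t, _⟩ : Fin (N + 1)) < s from h), eq_rec_constant]
    rfl
  · simp [s.isLt]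
  · rw [if_neg (by omega), if_neg (by omega)]
    by_cases ht : t < N + 1
    · rw [dif_pos ht, dif_pos (by omega),
        Fin.insertNth_apply_above (show s < (⟨t, ht⟩ : Fin (N + 1)) from h), eq_rec_constant]
      rfl
    · rw [dif_neg ht, dif_neg (by omega)]

theorem sum_extendFin_succ {M : Type*} [AddCommMonoid M] [Fintype α] {N : ℕ} (d : α)
    {s : ℕ} (hs : s ≤ N) (F : (ℕ → α) → M) :
    ∑ k : Fin (N + 1) → α, F (extendFin k d)
      = ∑ k : Fin N → α, ∑ a : α, F (insertAt s a (extendFin k d)) := by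
  rw [← (Fin.insertNthEquiv (fun _ => α) ⟨s, by omega⟩).sum_comp, Fintype.sum_prod_type,
    sum_comm]
  exact sum_congr rfl fun k _ => sum_congr rfl fun a _ =>
    congrArg F (extendFin_insertNth _ a k d)

def pathEdges {β : Type*} (ξ : α → α → β) (K : ℕ → α) : ℕ → β :=
  fun t => ξ (K t) (K (t + 1))

theorem pathEdges_insertAt_succ_self {β : Type*} (ξ : α → α → β) (s : ℕ) (f : ℕ → α) :
    pathEdges ξ (insertAt (s + 1) (f s) f) = insertAt s (ξ (f s) (f s)) (pathEdges ξ f) := by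
  ext t
  rcases lt_trichotomy t s with h | rfl | h
  · simp [insertAt, pathEdges, h, show t < s + 1 by omega, show t + 1 < s + 1 by omega]
  · simp [pathEdges, insertAt_apply_of_lt]
  · obtain ⟨t, rfl⟩ : ∃ t', t = t' + 1 := ⟨t - 1, by omega⟩
    simp only [pathEdges, insertAt_succ_self_apply_succ (show s ≤ t by omega),
      insertAt_succ_self_apply_succ (show s ≤ t + 1 by omega)]
    simp [insertAt, pathEdges, show ¬ t + 1 < s by omega, show t + 1 ≠ s by omega]

end Sequences

section Contraction

variable {M : Type*} [Mul M]

def contractAt (p : ℕ) (e : ℕ → M) : ℕ → M :=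
  fun q => if q < p then e q else if q = p then e p * e (p + 1) else e (q + 1)

theorem contractAt_pathEdges_insertAt {ι : Type*} (ξ : ι → ι → M) (s : ℕ) (a : ι) (f : ℕ → ι) :
    contractAt s (pathEdges ξ (insertAt (s + 1) a f))
      = Function.update (pathEdges ξ f) s (ξ (f s) a * ξ a (f (s + 1))) := by
  ext q
  rcases lt_trichotomy q s with h | rfl | h
  · simp [contractAt, pathEdges, h, h.ne, insertAt_apply_of_lt, show q < s + 1 by omega,
      show q + 1 < s + 1 by omega]
  · simp [contractAt, pathEdges, insertAt_apply_of_lt, insertAt_apply_succ_of_le]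
  · simp [contractAt, pathEdges, h.ne', show ¬ q < s by omega, insertAt_apply_succ_of_le,
      show s + 1 ≤ q by omega, show s + 1 ≤ q + 1 by omega]

end Contraction

section PureTensors

variable {R} {A : Type} [Ring A] [Algebra R A]

theorem pureT_update_sum {β : Type} (S : Finset β) (F : β → A) :
    ∀ {m p : ℕ}, p ≤ m → ∀ g : ℕ → A,
      ∑ b ∈ S, pureT R A (Function.update g p (F b)) m
        = pureT R A (Function.update g p (∑ b ∈ S, F b)) m
  | 0, 0, _, g => by
      change ∑ b ∈ S, Function.update g 0 (F b) 0 = Function.update g 0 (∑ b ∈ S, F b) 0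
      simp
  | m + 1, 0, _, g => by
      have htail : ∀ x : A, (fun t => Function.update g 0 x (t + 1)) = fun t => g (t + 1) :=
        fun x => funext fun t => Function.update_of_ne t.succ_ne_zero x g
      change ∑ b ∈ S, (Function.update g 0 (F b) 0 ⊗ₜ[R]
          pureT R A (fun t => Function.update g 0 (F b) (t + 1)) m : A ⊗[R] TS R A m)
        = Function.update g 0 (∑ b ∈ S, F b) 0 ⊗ₜ[R]
          pureT R A (fun t => Function.update g 0 (∑ b ∈ S, F b) (t + 1)) m
      simp only [htail, Function.update_self, TensorProduct.sum_tmul]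
  | m + 1, p + 1, hp, g => by
      have hshift : ∀ x : A, (fun t => Function.update g (p + 1) x (t + 1))
          = Function.update (fun t => g (t + 1)) p x := fun x =>
        Function.update_comp_eq_of_injective g Nat.succ_injective p x
      change ∑ b ∈ S, (Function.update g (p + 1) (F b) 0 ⊗ₜ[R]
          pureT R A (fun t => Function.update g (p + 1) (F b) (t + 1)) m : A ⊗[R] TS R A m)
        = Function.update g (p + 1) (∑ b ∈ S, F b) 0 ⊗ₜ[R]
          pureT R A (fun t => Function.update g (p + 1) (∑ b ∈ S, F b) (t + 1)) m
      simp only [hshift, Function.update_of_ne (Nat.succ_ne_zero p).symm,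
        ← TensorProduct.tmul_sum, pureT_update_sum S F (by omega : p ≤ m)]

theorem pureT_update_zero {m p : ℕ} (hp : p ≤ m) (g : ℕ → A) :
    pureT R A (Function.update g p 0) m = 0 := by
  simpa using (pureT_update_sum (∅ : Finset A) id hp g).symm

end PureTensors

section CurvedPaths

variable {R} {A : Type} [Ring A] [Algebra R A] {ι : Type} [Fintype ι] [DecidableEq ι]
  {ω : A} {ξ : ι → ι → A}

theorem sum_pureT_contractAt_pathEdges_insertAt
    (hcurv : ∀ i j : ι, (∑ ℓ : ι, ξ i ℓ * ξ ℓ j) = if i = j then ω else 0)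
    {s n : ℕ} (hs : s ≤ n) (f : ℕ → ι) :
    ∑ a : ι, pureT R A (contractAt s (pathEdges ξ (insertAt (s + 1) a f))) n
      = pureT R A (Function.update (pathEdges ξ f) s (if f s = f (s + 1) then ω else 0)) n := by
  simp only [contractAt_pathEdges_insertAt]
  rw [pureT_update_sum univ (fun a => ξ (f s) a * ξ a (f (s + 1))) hs, hcurv]

theorem sum_ite_pureT_update_pathEdges_insertAt (P : ι → Prop) [DecidablePred P]
    {s n : ℕ} (hs : s ≤ n) (f : ℕ → ι) :
    ∑ b : ι, (if P b then
        pureT R A (Function.update (pathEdges ξ (insertAt (s + 1) b f)) s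
          (if f s = b then ω else 0)) n
      else 0)
      = if P (f s) then pureT R A (insertAt s ω (pathEdges ξ f)) n else 0 := by
  rw [Fintype.sum_eq_single (f s)]
  · simp only [if_true, pathEdges_insertAt_succ_self, update_insertAt_self]
  · intro b hb
    simp [Ne.symm hb, pureT_update_zero hs]

theorem sum_pureT_contractAt_eq_sum_pureT_insertAt
    (hcurv : ∀ i j : ι, (∑ ℓ : ι, ξ i ℓ * ξ ℓ j) = if i = j then ω else 0)
    {p n : ℕ} (hp : p ≤ n) (i j : ι) :
    ∑ k : Fin (n + 3) → ι, (if extendFin k i 0 = i ∧ extendFin k i (n + 2) = j then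
        pureT R A (contractAt p (pathEdges ξ (extendFin k i))) n else 0)
      = ∑ l : Fin (n + 1) → ι, (if extendFin l i 0 = i ∧ extendFin l i n = j then
        pureT R A (insertAt p ω (pathEdges ξ (extendFin l i))) n else 0) := by
  calc _ = ∑ k : Fin (n + 2) → ι, (if extendFin k i 0 = i ∧ extendFin k i (n + 1) = j then
          pureT R A (Function.update (pathEdges ξ (extendFin k i)) p
            (if extendFin k i p = extendFin k i (p + 1) then ω else 0)) n else 0) := by
        rw [sum_extendFin_succ i (s := p + 1) (by omega) fun K =>
          if K 0 = i ∧ K (n + 2) = j then pureT R A (contractAt p (pathEdges ξ K)) n else 0]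
        refine sum_congr rfl fun k _ => ?_
        simp only [insertAt_apply_of_lt p.succ_pos,
          insertAt_apply_succ_of_le (show p + 1 ≤ n + 1 by omega), sum_ite_irrel,
          sum_const_zero, sum_pureT_contractAt_pathEdges_insertAt hcurv hp]
    _ = _ := by
        rw [sum_extendFin_succ i (s := p + 1) (by omega) fun K =>
          if K 0 = i ∧ K (n + 1) = j then
            pureT R A (Function.update (pathEdges ξ K) p (if K p = K (p + 1) then ω else 0)) n
          else 0]
        refine sum_congr rfl fun l _ => ?_
        simp only [insertAt_apply_of_lt p.succ_pos, insertAt_apply_of_lt p.lt_succ_self,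
          insertAt_apply_self]
        rw [sum_ite_pureT_update_pathEdges_insertAt
          (fun b => extendFin l i 0 = i ∧ insertAt (p + 1) b (extendFin l i) (n + 1) = j) hp]
        simp only [insertAt_succ_self_apply_succ hp]

end CurvedPaths

theorem D_structure_second_identity_coordinates
    (A : Type) [Ring A] [Algebra R A]
    (ω : A)
    (ι : Type) [Fintype ι] [DecidableEq ι]
    (ξ : ι → ι → A)
    (hcurv : ∀ i j : ι, (∑ ℓ : ι, ξ i ℓ * ξ ℓ j) = if i = j then ω else 0)
    (m : ℕ) (i j : ι) :
    (∑ k : Fin (m + 2) → ι, ∑ p : Fin m,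
        (let K : ℕ → ι := fun t => if h : t < m + 2 then k ⟨t, h⟩ else i
         let E : ℕ → A := fun t => ξ (K t) (K (t + 1))
         if K 0 = i ∧ K (m + 1) = j then
           pureT R A
             (fun q => if q < (p : ℕ) then E q
               else if q = (p : ℕ) then E (p : ℕ) * E ((p : ℕ) + 1) else E (q + 1))
             (m - 1)
         else 0))
    = (∑ l : Fin m → ι, ∑ q : Fin m,
        (let L : ℕ → ι := fun t => if h : t < m then l ⟨t, h⟩ else i
         let E' : ℕ → A := fun t => ξ (L t) (L (t + 1))
         if L 0 = i ∧ L (m - 1) = j then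
           pureT R A
             (fun r => if r < (q : ℕ) then E' r
               else if r = (q : ℕ) then ω else E' (r - 1))
             (m - 1)
         else 0)) := by
  rcases m with _ | n
  · simp
  change ∑ k : Fin (n + 3) → ι, ∑ p : Fin (n + 1),
      (if extendFin k i 0 = i ∧ extendFin k i (n + 2) = j then
        pureT R A (contractAt p (pathEdges ξ (extendFin k i))) n else 0)
    = ∑ l : Fin (n + 1) → ι, ∑ q : Fin (n + 1),
      (if extendFin l i 0 = i ∧ extendFin l i n = j then
        pureT R A (insertAt q ω (pathEdges ξ (extendFin l i))) n else 0)
  rw [sum_comm, sum_comm (s := (univ : Finset (Fin (n + 1) → ι)))]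
  exact sum_congr rfl fun p _ =>
    sum_pureT_contractAt_eq_sum_pureT_insertAt hcurv (Nat.lt_succ_iff.mp p.isLt) i j

end
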